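/- In the CESK* machine, the chain of continuation pointers in any reachable state is acyclic: starting from the current continuation and repeatedly following the stored continuation address, one never revisits an address, and the chain terminates at mt. -/

import Mathlib

/- Statement 2: in any reachable CESK* state, the chain of continuation
   pointers is acyclic: following stored continuation addresses never
   revisits an address and terminates at mt. -/

inductive Exp : Type
  | ref : String → Exp
  | lam : String → Exp → Exp
  | app : Exp → Exp → Exp
deriving DecidableEq

def Exp.fv : Exp → List String
  | .ref x => [x]
  | .lam x e => e.fv.filter (· ≠ x)
  | .app e₀ e₁ => e₀.fv ++ e₁.fv

def Exp.Closed (e : Exp) : Prop := e.fv = []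

abbrev Addr := ℕ
abbrev Env := List (String × Addr)
abbrev Clo := Exp × Env

inductive PKont : Type
  | mt
  | ar (e : Exp) (ρ : Env) (a : Addr)
  | fn (v : Exp) (ρ : Env) (a : Addr)

inductive Storable : Type
  | clo (c : Clo)
  | kont (κ : PKont)

abbrev PStore := List (Addr × Storable)
abbrev State := Exp × Env × PStore × PKont

inductive Step : State → State → Prop
  | var {x ρ σ κ a v ρ'} :
      List.lookup x ρ = some a → List.lookup a σ = some (.clo (v, ρ')) →
      Step (.ref x, ρ, σ, κ) (v, ρ', σ, κ)
  | app {e₀ e₁ ρ σ κ} {a : Addr} :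
      List.lookup a σ = none →
      Step (.app e₀ e₁, ρ, σ, κ) (e₀, ρ, (a, .kont κ) :: σ, .ar e₁ ρ a)
  | arg {x e ρ σ e' ρ' a} :
      Step (.lam x e, ρ, σ, .ar e' ρ' a) (e', ρ', σ, .fn (.lam x e) ρ a)
  | beta {x e ρ σ y e' ρ' κ} {b a : Addr} :
      List.lookup b σ = some (.kont κ) →
      List.lookup a σ = none →
      Step (.lam x e, ρ, σ, .fn (.lam y e') ρ' b)
        (e', (y, a) :: ρ', (a, .clo (Exp.lam x e, ρ)) :: σ, κ)

def inject (e : Exp) : State := (e, [], [], .mt)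

def Reachable (e : Exp) (ς : State) : Prop :=
  Relation.ReflTransGen Step (inject e) ς

/-- `Chain σ κ l`: the pointer chain from continuation `κ` through the store
    `σ` is exactly the list of addresses `l`, terminating at `mt`. -/
inductive Chain (σ : PStore) : PKont → List Addr → Prop
  | mt : Chain σ .mt []
  | ar {e ρ a κ' l} :
      List.lookup a σ = some (.kont κ') → Chain σ κ' l →
      Chain σ (.ar e ρ a) (a :: l)
  | fn {v ρ a κ' l} :
      List.lookup a σ = some (.kont κ') → Chain σ κ' l →
      Chain σ (.fn v ρ a) (a :: l)

/-!
Acyclicity comes for free once the chain is known to exist: the chain from a continuation is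
determined by the store, so if an address repeated, the chain from the continuation stored there
would be a proper suffix of itself. What has to be carried through the machine is therefore only
that the current continuation and every stored one have a (finite) chain. Steps only ever add
fresh addresses, which leaves existing chains intact, and the new continuations they create point
into the old store.
-/

theorem List.lookup_cons_of_ne {α β : Type*} [BEq α] [LawfulBEq α] {a b : α} {t : β}
    (σ : List (α × β)) (h : b ≠ a) : ((a, t) :: σ).lookup b = σ.lookup b := by
  rw [List.lookup, beq_eq_false_iff_ne.mpr h]

theorem List.lookup_cons_of_lookup_eq_none {α β : Type*} [BEq α] [LawfulBEq α] {a b : α}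
    {s t : β} {σ : List (α × β)} (ha : σ.lookup a = none) (hb : σ.lookup b = some s) :
    ((a, t) :: σ).lookup b = some s := by
  have hne : b ≠ a := by rintro rfl; simp_all
  rwa [List.lookup_cons_of_ne σ hne]

namespace Chain

variable {σ : PStore} {κ : PKont} {l : List Addr}

theorem mono {σ' : PStore} (hσ : ∀ b s, σ.lookup b = some s → σ'.lookup b = some s)
    (h : Chain σ κ l) : Chain σ' κ l := by
  induction h with
  | mt => exact .mt
  | ar hb _ ih => exact .ar (hσ _ _ hb) ih
  | fn hb _ ih => exact .fn (hσ _ _ hb) ih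

theorem cons_fresh {a : Addr} (ha : σ.lookup a = none) (s : Storable) (h : Chain σ κ l) :
    Chain ((a, s) :: σ) κ l :=
  h.mono fun _ _ ↦ List.lookup_cons_of_lookup_eq_none ha

theorem unique {l' : List Addr} (h : Chain σ κ l) (h' : Chain σ κ l') : l = l' := by
  induction h generalizing l' with
  | mt => cases h'; rfl
  | ar hb _ ih | fn hb _ ih =>
    rcases h' with _ | ⟨hb', h'⟩ | ⟨hb', h'⟩
    rw [hb, Option.some.injEq, Storable.kont.injEq] at hb'
    subst hb'
    rw [ih h']

theorem exists_shorter_of_mem {a : Addr} (h : Chain σ κ l) (ha : a ∈ l) :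
    ∃ κ' l', σ.lookup a = some (.kont κ') ∧ Chain σ κ' l' ∧ l'.length < l.length := by
  induction h with
  | mt => cases ha
  | ar hb h ih | fn hb h ih =>
    rcases List.mem_cons.1 ha with rfl | ha
    · exact ⟨_, _, hb, h, Nat.lt_succ_self _⟩
    · obtain ⟨κ', l', hκ', h', hlen⟩ := ih ha
      exact ⟨κ', l', hκ', h', Nat.lt_succ_of_lt hlen⟩

theorem nodup (h : Chain σ κ l) : l.Nodup := by
  induction h with
  | mt => exact List.nodup_nil
  | ar hb h ih | fn hb h ih =>
    refine List.nodup_cons.2 ⟨fun ha ↦ ?_, ih⟩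
    obtain ⟨κ', l', hκ', h', hlen⟩ := h.exists_shorter_of_mem ha
    rw [hb, Option.some.injEq, Storable.kont.injEq] at hκ'
    subst hκ'
    exact hlen.ne (congrArg List.length (h'.unique h))

end Chain

def HasChain (σ : PStore) (κ : PKont) : Prop := ∃ l, Chain σ κ l

def StoreChained (σ : PStore) : Prop := ∀ b κ, σ.lookup b = some (.kont κ) → HasChain σ κ

def ChainInv : State → Prop
  | (_, _, σ, κ) => HasChain σ κ ∧ StoreChained σ

theorem StoreChained.cons_fresh {σ : PStore} {a : Addr} (hσ : StoreChained σ)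
    (ha : σ.lookup a = none) (s : Storable) (hs : ∀ κ, s = .kont κ → HasChain σ κ) :
    StoreChained ((a, s) :: σ) := by
  intro b κ hb
  by_cases hba : b = a
  · subst hba
    rw [List.lookup_cons_self, Option.some.injEq] at hb
    obtain ⟨l, hl⟩ := hs κ hb
    exact ⟨l, hl.cons_fresh ha s⟩
  · rw [List.lookup_cons_of_ne σ hba] at hb
    obtain ⟨l, hl⟩ := hσ b κ hb
    exact ⟨l, hl.cons_fresh ha s⟩

theorem Step.chainInv {ς ς' : State} (h : Step ς ς') (hinv : ChainInv ς) : ChainInv ς' := by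
  cases h with
  | var => exact hinv
  | @app _ _ _ σ κ a ha =>
    obtain ⟨⟨l, hl⟩, hσ⟩ := hinv
    exact ⟨⟨a :: l, .ar List.lookup_cons_self (hl.cons_fresh ha _)⟩,
      hσ.cons_fresh ha _ fun _ h ↦ Storable.kont.inj h ▸ ⟨l, hl⟩⟩
  | arg =>
    obtain ⟨⟨l, hl⟩, hσ⟩ := hinv
    rcases hl with _ | ⟨hb, hl⟩
    exact ⟨⟨_, .fn hb hl⟩, hσ⟩
  | beta hb ha =>
    obtain ⟨-, hσ⟩ := hinv
    obtain ⟨l, hl⟩ := hσ _ _ hb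
    exact ⟨⟨l, hl.cons_fresh ha _⟩, hσ.cons_fresh ha _ fun _ h ↦ by cases h⟩

theorem Reachable.chainInv {e : Exp} {ς : State} (h : Reachable e ς) : ChainInv ς := by
  induction h with
  | refl => exact ⟨⟨[], .mt⟩, fun _ _ h ↦ by cases h⟩
  | tail _ hstep ih => exact hstep.chainInv ih

theorem pointer_chain_acyclic_general (e : Exp)
    {exp : Exp} {ρ : Env} {σ : PStore} {κ : PKont}
    (hreach : Reachable e (exp, ρ, σ, κ)) :
    ∃ l : List Addr, Chain σ κ l ∧ l.Nodup := by
  obtain ⟨⟨l, hl⟩, -⟩ := hreach.chainInv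
  exact ⟨l, hl, hl.nodup⟩

theorem pointer_chain_acyclic (e : Exp) (he : e.Closed)
    {exp : Exp} {ρ : Env} {σ : PStore} {κ : PKont}
    (hreach : Reachable e (exp, ρ, σ, κ)) :
    ∃ l : List Addr, Chain σ κ l ∧ l.Nodup :=
  pointer_chain_acyclic_general e hreach
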